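/- arXiv:1906.01225 — 3 statements merged into one kernel-verified Lean document; each statement's English description precedes it below -/
import Mathlib

section
/- Let A be a real d×d matrix all of whose eigenvalues have strictly positive real part, and let K be a real d×d' matrix; set C := ∫₀^∞ exp(-sA) · K Kᵀ · exp(-sAᵀ) ds. Then A is invertible and A⁻¹ K Kᵀ (A⁻¹)ᵀ = A⁻¹ C + C (A⁻¹)ᵀ. Consequently, for any real n×d matrix σ, writing Γ := σ A⁻¹ K, one has σ (A⁻¹ C + C (A⁻¹)ᵀ) σᵀ = Γ Γᵀ. -/
/-!
By spectral mapping, the spectrum of `exp (-A)` lies in `exp (-spectrum A)`, inside the open unit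
disc, so Gelfand's formula gives `‖exp (-A) ^ n‖ ≤ C qⁿ` with `q < 1` and hence
`‖exp (-sA)‖ = O(e^{-εs})`. The integrand `F s = exp (-sA) K Kᵀ exp (-sAᵀ)` therefore decays
exponentially, and integrating `F' = -(A F + F Aᵀ)` over `(0, ∞)` gives the Lyapunov equation
`A C + C Aᵀ = F 0 = K Kᵀ`. Multiplying it by `A⁻¹` on the left and by `(A⁻¹)ᵀ` on the right gives
the identity.
-/

open Matrix MeasureTheory

/-- The integrand `exp(-sA) · K Kᵀ · exp(-sAᵀ)` of the Lyapunov integral. -/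
noncomputable def lyapunovIntegrand {d d' : ℕ} (A : Matrix (Fin d) (Fin d) ℝ)
    (K : Matrix (Fin d) (Fin d') ℝ) (s : ℝ) : Matrix (Fin d) (Fin d) ℝ :=
  NormedSpace.exp (-(s • A)) * (K * Kᵀ) * NormedSpace.exp (-(s • Aᵀ))

/-- The matrix `C := ∫₀^∞ exp(-sA) K Kᵀ exp(-sAᵀ) ds`, defined entrywise. -/
noncomputable def lyapunovSolution {d d' : ℕ} (A : Matrix (Fin d) (Fin d) ℝ)
    (K : Matrix (Fin d) (Fin d') ℝ) : Matrix (Fin d) (Fin d) ℝ :=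
  Matrix.of fun i j => ∫ s in Set.Ioi (0 : ℝ), lyapunovIntegrand A K s i j

open NormedSpace Filter Asymptotics Topology Set
open scoped NNReal

section ComplexBanachAlgebra

variable {E : Type*} [NormedRing E] [NormedAlgebra ℂ E] [CompleteSpace E]

theorem map_exp_of_continuous {F : Type*} [NormedRing F] [NormedAlgebra ℂ F] [CompleteSpace F]
    {G : Type*} [FunLike G E F] [RingHomClass G E F] (f : G) (hf : Continuous f) (x : E) :
    f (exp x) = exp (f x) :=
  map_exp_of_mem_ball (𝕂 := ℂ) f hf x (by simp [expSeries_radius_eq_top])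

noncomputable instance (a : E) : NormedCommRing (Algebra.elemental ℂ a) :=
  { SubringClass.toNormedRing (Algebra.elemental ℂ a) with mul_comm := mul_comm }

/- Every point of the spectrum of `exp a` is `φ (exp a) = exp (φ a)` for a character `φ` of the
closed commutative subalgebra generated by `a`; the connectedness hypothesis makes the spectrum of
`a` in that subalgebra equal to its spectrum in `E`. -/
theorem spectrum_exp_subset_image_exp {a : E} (h : IsPreconnected (spectrum ℂ a)ᶜ) :
    spectrum ℂ (exp a) ⊆ Complex.exp '' spectrum ℂ a := by
  intro μ hμ
  set S := Algebra.elemental ℂ a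
  set b : S := ⟨a, Algebra.elemental.self_mem ℂ a⟩
  have hexp : ((exp b : S) : E) = exp a := map_exp_of_continuous S.val continuous_subtype_val b
  rw [← hexp] at hμ
  obtain ⟨φ, hφ⟩ :=
    WeakDual.CharacterSpace.mem_spectrum_iff_exists.mp (spectrum.subset_subalgebra _ hμ)
  set ψ := WeakDual.CharacterSpace.equivAlgHom φ
  refine ⟨ψ b, ?_, ?_⟩
  · rw [← Subalgebra.spectrum_eq_of_isPreconnected_compl S b h]
    exact AlgHom.apply_mem_spectrum ψ b
  · rw [← hφ, Complex.exp_eq_exp_ℂ, ← map_exp_of_continuous ψ φ.1.cont]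
    rfl

theorem eventually_norm_pow_le_of_spectralRadius_lt (a : E) {q : ℝ≥0}
    (h : spectralRadius ℂ a < q) : ∀ᶠ n : ℕ in atTop, ‖a ^ n‖ ≤ q ^ n := by
  have hgelfand :=
    (spectrum.pow_norm_pow_one_div_tendsto_nhds_spectralRadius a).eventually_lt_const h
  filter_upwards [hgelfand, eventually_gt_atTop 0] with n hn hn0
  rw [ENNReal.ofReal_lt_coe_iff (by positivity), one_div] at hn
  have := (Real.rpow_inv_lt_iff_of_pos (norm_nonneg _) q.2 (Nat.cast_pos.mpr hn0)).mp hn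
  rw [Real.rpow_natCast] at this
  exact this.le

theorem exp_smul_eq_exp_pow_mul (a : E) (t : ℝ) :
    exp ((t : ℂ) • a) = exp a ^ ⌊t⌋₊ * exp (((t - ⌊t⌋₊ : ℝ) : ℂ) • a) := by
  let +nondep : NormedAlgebra ℚ E := .restrictScalars ℚ ℂ E
  have hsplit : (t : ℂ) • a = ⌊t⌋₊ • a + ((t - ⌊t⌋₊ : ℝ) : ℂ) • a := by
    rw [← Nat.cast_smul_eq_nsmul ℂ, ← add_smul]
    push_cast
    ring_nf
  rw [hsplit, NormedSpace.exp_add_of_commute ((Commute.refl a).smul_left _ |>.smul_right _),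
    NormedSpace.exp_nsmul]

theorem isBigO_exp_smul_of_spectralRadius_lt_one {a : E} (h : spectralRadius ℂ (exp a) < 1) :
    ∃ ε > 0, (fun t : ℝ => exp ((t : ℂ) • a)) =O[atTop] fun t => Real.exp (-ε * t) := by
  let +nondep : NormedAlgebra ℚ E := .restrictScalars ℚ ℂ E
  obtain ⟨q, hρq, hq⟩ := ENNReal.lt_iff_exists_nnreal_btwn.mp h
  have hq0 : (0 : ℝ) < q := by exact_mod_cast ENNReal.coe_pos.mp (pos_of_gt hρq)
  have hq1 : (q : ℝ) < 1 := by exact_mod_cast hq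
  obtain ⟨N, hN⟩ :=
    (eventually_norm_pow_le_of_spectralRadius_lt (exp a) hρq).exists_forall_of_atTop
  obtain ⟨M, hM⟩ := isCompact_Icc.exists_bound_of_continuousOn (s := Icc (0 : ℝ) 1)
    (f := fun r : ℝ => exp ((r : ℂ) • a))
    (exp_continuous.comp (Complex.continuous_ofReal.smul continuous_const)).continuousOn
  refine ⟨-Real.log q, neg_pos.mpr (Real.log_neg hq0 hq1), IsBigO.of_bound (M * (q : ℝ)⁻¹) ?_⟩
  filter_upwards [eventually_ge_atTop (N : ℝ)] with t ht
  have hfrac : t - ⌊t⌋₊ ∈ Icc (0 : ℝ) 1 :=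
    ⟨sub_nonneg.mpr (Nat.floor_le ((Nat.cast_nonneg N).trans ht)),
      by linarith [Nat.lt_floor_add_one t]⟩
  have hpow : (q : ℝ) ^ ⌊t⌋₊ ≤ (q : ℝ)⁻¹ * Real.exp (-(-Real.log q) * t) := by
    rw [neg_neg, mul_comm, Real.exp_mul, Real.exp_log hq0, ← Real.rpow_natCast,
      ← Real.rpow_neg_one, ← Real.rpow_add hq0]
    exact Real.rpow_le_rpow_of_exponent_ge hq0 hq1.le (by linarith [Nat.lt_floor_add_one t])
  rw [exp_smul_eq_exp_pow_mul, Real.norm_eq_abs, abs_of_pos (Real.exp_pos _)]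
  calc ‖exp a ^ ⌊t⌋₊ * exp (((t - ⌊t⌋₊ : ℝ) : ℂ) • a)‖
      ≤ q ^ ⌊t⌋₊ * M := (norm_mul_le _ _).trans
        (mul_le_mul (hN _ (Nat.le_floor ht)) (hM _ hfrac) (norm_nonneg _) (by positivity))
    _ ≤ (q : ℝ)⁻¹ * Real.exp (-(-Real.log q) * t) * M :=
        mul_le_mul_of_nonneg_right hpow ((norm_nonneg _).trans (hM 0 (by simp)))
    _ = _ := by ring

end ComplexBanachAlgebra

theorem MeasureTheory.integrableOn_Ioi_of_isBigO_exp_neg {F : Type*} [NormedAddCommGroup F]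
    {f : ℝ → F} {a b : ℝ} (hb : 0 < b) (hf : ContinuousOn f (Ici a))
    (ho : f =O[atTop] fun x => Real.exp (-b * x)) : IntegrableOn f (Ioi a) :=
  (integrableOn_Ici_iff_integrableOn_Ioi (by finiteness)).mp <|
    (hf.locallyIntegrableOn measurableSet_Ici).integrableOn_of_isBigO_atTop
    ho ⟨Ioi b, Ioi_mem_atTop b, exp_neg_integrableOn_Ioi b hb⟩

section Sylvester

variable {𝔸 : Type*} [NormedRing 𝔸] [NormedAlgebra ℝ 𝔸] [CompleteSpace 𝔸] (a b m : 𝔸)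

theorem hasDerivAt_exp_neg_smul_mul_mul_exp_neg_smul (s : ℝ) :
    HasDerivAt (fun t : ℝ => exp (-(t • a)) * m * exp (-(t • b)))
      (-(a * (exp (-(s • a)) * m * exp (-(s • b))) + exp (-(s • a)) * m * exp (-(s • b)) * b))
      s := by
  have h :=
    ((hasDerivAt_exp_smul_const' (-a) s).mul_const m).mul (hasDerivAt_exp_smul_const (-b) s)
  simp only [smul_neg] at h
  exact h.congr_deriv (by noncomm_ring)

theorem mul_integral_add_integral_mul_eq_of_isBigO {ε : ℝ} (hε : 0 < ε)
    (hO : (fun s : ℝ => exp (-(s • a)) * m * exp (-(s • b))) =O[atTop]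
      fun s => Real.exp (-ε * s)) :
    a * (∫ s in Ioi (0 : ℝ), exp (-(s • a)) * m * exp (-(s • b))) +
      (∫ s in Ioi (0 : ℝ), exp (-(s • a)) * m * exp (-(s • b))) * b = m := by
  set F := fun s : ℝ => exp (-(s • a)) * m * exp (-(s • b))
  have hderiv := hasDerivAt_exp_neg_smul_mul_mul_exp_neg_smul a b m
  have hcont : Continuous F := continuous_iff_continuousAt.mpr fun s => (hderiv s).continuousAt
  have hint : IntegrableOn F (Ioi 0) := integrableOn_Ioi_of_isBigO_exp_neg hε hcont.continuousOn hO
  have hlim : Tendsto F atTop (𝓝 0) :=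
    hO.trans_tendsto <| Real.tendsto_exp_atBot.comp <|
      tendsto_id.const_mul_atTop_of_neg (neg_neg_iff_pos.mpr hε)
  let L : 𝔸 →L[ℝ] 𝔸 := ContinuousLinearMap.mul ℝ 𝔸 a + (ContinuousLinearMap.mul ℝ 𝔸).flip b
  have hFTC := integral_Ioi_of_hasDerivAt_of_tendsto (f' := fun s => -L (F s))
    hcont.continuousWithinAt (fun s _ => hderiv s) (L.integrable_comp hint).neg hlim
  rw [integral_neg, L.integral_comp_comm hint, zero_sub, neg_inj] at hFTC
  simpa [L, F] using hFTC

end Sylvester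

section MatrixExp

attribute [local instance] Matrix.linftyOpNormedAddCommGroup Matrix.linftyOpNormedSpace
  Matrix.linftyOpNormedRing Matrix.linftyOpNormedAlgebra

variable {n : Type*} [Fintype n] [DecidableEq n]

theorem Matrix.isPreconnected_compl_spectrum (B : Matrix n n ℂ) :
    IsPreconnected (spectrum ℂ B)ᶜ :=
  (B.finite_spectrum.countable.isConnected_compl_of_one_lt_rank (by simp)).isPreconnected

theorem Matrix.spectralRadius_exp_neg_lt_one {B : Matrix n n ℂ}
    (hB : ∀ μ ∈ spectrum ℂ B, 0 < μ.re) : spectralRadius ℂ (exp (-B)) < 1 := by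
  rcases (spectrum ℂ (exp (-B))).eq_empty_or_nonempty with h | h
  · simp [spectralRadius, h]
  refine spectrum.spectralRadius_lt_of_forall_lt_of_nonempty h fun μ hμ => ?_
  obtain ⟨ν, hν, rfl⟩ := spectrum_exp_subset_image_exp (-B).isPreconnected_compl_spectrum hμ
  rw [← spectrum.neg_eq, Set.mem_neg] at hν
  have : ‖Complex.exp ν‖ < 1 := by simpa [Complex.norm_exp] using hB _ hν
  exact_mod_cast this

theorem Matrix.map_ofReal_exp (M : Matrix n n ℝ) :
    (exp M).map Complex.ofReal = exp (M.map Complex.ofReal) :=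
  map_exp Complex.ofRealHom.mapMatrix (continuous_id.matrix_map Complex.continuous_ofReal) M

theorem Matrix.isBigO_exp_neg_smul {A : Matrix n n ℝ}
    (hA : ∀ μ ∈ spectrum ℂ (A.map Complex.ofReal), 0 < μ.re) :
    ∃ ε > 0, (fun t : ℝ => exp (-(t • A))) =O[atTop] fun t => Real.exp (-ε * t) := by
  have hρ := Matrix.spectralRadius_exp_neg_lt_one hA
  obtain ⟨ε, hε, hO⟩ := isBigO_exp_smul_of_spectralRadius_lt_one hρ
  let re : Matrix n n ℂ →L[ℝ] Matrix n n ℝ :=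
    LinearMap.toContinuousLinearMap Complex.reLm.mapMatrix
  have hre (t : ℝ) : re (exp ((t : ℂ) • -A.map Complex.ofReal)) = exp (-(t • A)) := by
    have hmap : (t : ℂ) • -A.map Complex.ofReal = (-(t • A)).map Complex.ofReal := by
      ext i j
      simp
    rw [hmap, ← Matrix.map_ofReal_exp]
    ext i j
    simp [re]
  exact ⟨ε, hε, ((re.isBigO_comp _ atTop).trans hO).congr_left hre⟩

section Lyapunov

variable {d d' : ℕ} (A : Matrix (Fin d) (Fin d) ℝ) (K : Matrix (Fin d) (Fin d') ℝ)

theorem isBigO_lyapunovIntegrand (hA : ∀ μ ∈ spectrum ℂ (A.map Complex.ofReal), 0 < μ.re) :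
    ∃ ε > 0, lyapunovIntegrand A K =O[atTop] fun t => Real.exp (-ε * t) := by
  obtain ⟨ε, hε, hO⟩ := Matrix.isBigO_exp_neg_smul hA
  let tr : Matrix (Fin d) (Fin d) ℝ →L[ℝ] Matrix (Fin d) (Fin d) ℝ :=
    LinearMap.toContinuousLinearMap (transposeLinearEquiv _ _ ℝ ℝ).toLinearMap
  have hOT : (fun t : ℝ => exp (-(t • Aᵀ))) =O[atTop] fun t => Real.exp (-ε * t) := by
    refine ((tr.isBigO_comp _ atTop).trans hO).congr_left fun t => ?_
    change (exp (-(t • A)))ᵀ = _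
    rw [← exp_transpose, transpose_neg, transpose_smul]
  refine ⟨ε + ε, by positivity, ?_⟩
  refine ((hO.mul (isBigO_const_const (K * Kᵀ) one_ne_zero atTop)).mul hOT).congr_right
    fun t => ?_
  rw [mul_one, ← Real.exp_add]
  ring_nf

theorem lyapunovSolution_eq_integral {ε : ℝ} (hε : 0 < ε)
    (hO : lyapunovIntegrand A K =O[atTop] fun t => Real.exp (-ε * t)) :
    lyapunovSolution A K = ∫ s in Ioi (0 : ℝ), lyapunovIntegrand A K s := by
  have hcont : Continuous (lyapunovIntegrand A K) := continuous_iff_continuousAt.mpr fun s =>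
    (hasDerivAt_exp_neg_smul_mul_mul_exp_neg_smul A Aᵀ (K * Kᵀ) s).continuousAt
  have hint := integrableOn_Ioi_of_isBigO_exp_neg (a := 0) hε hcont.continuousOn hO
  ext i j
  exact (LinearMap.toContinuousLinearMap (entryLinearMap ℝ ℝ i j)).integral_comp_comm hint

theorem mul_lyapunovSolution_add_lyapunovSolution_mul_transpose
    (hA : ∀ μ ∈ spectrum ℂ (A.map Complex.ofReal), 0 < μ.re) :
    A * lyapunovSolution A K + lyapunovSolution A K * Aᵀ = K * Kᵀ := by
  obtain ⟨ε, hε, hO⟩ := isBigO_lyapunovIntegrand A K hA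
  rw [lyapunovSolution_eq_integral A K hε hO]
  exact mul_integral_add_integral_mul_eq_of_isBigO A Aᵀ (K * Kᵀ) hε hO

end Lyapunov

end MatrixExp

theorem Matrix.isUnit_of_isUnit_map_ofReal {n : Type*} [Fintype n] [DecidableEq n]
    {A : Matrix n n ℝ} (h : IsUnit (A.map Complex.ofReal)) : IsUnit A := by
  have hdet : (A.map Complex.ofReal).det = A.det := (Complex.ofRealHom.map_det A).symm
  rw [isUnit_iff_isUnit_det, hdet, isUnit_iff_ne_zero, Complex.ofReal_ne_zero] at h
  exact A.isUnit_iff_isUnit_det.mpr h.isUnit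

theorem Matrix.inv_mul_mul_transpose_inv_eq {n R : Type*} [Fintype n] [DecidableEq n]
    [CommRing R] {A C Q : Matrix n n R} (hA : IsUnit A) (h : A * C + C * Aᵀ = Q) :
    A⁻¹ * Q * A⁻¹ᵀ = A⁻¹ * C + C * A⁻¹ᵀ := by
  have hdet : IsUnit A.det := A.isUnit_iff_isUnit_det.mp hA
  have hdetT : IsUnit Aᵀ.det := by rwa [det_transpose]
  rw [← h, transpose_nonsing_inv, Matrix.mul_add, Matrix.add_mul,
    nonsing_inv_mul_cancel_left _ _ hdet, ← Matrix.mul_assoc,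
    mul_nonsing_inv_cancel_right _ _ hdetT, add_comm]

/-- If all eigenvalues of `A` have positive real part and
`C := ∫₀^∞ exp(-sA) K Kᵀ exp(-sAᵀ) ds`, then `A` is invertible,
`A⁻¹ K Kᵀ (A⁻¹)ᵀ = A⁻¹ C + C (A⁻¹)ᵀ`, and for every `n × d` matrix `σ`, with
`Γ := σ A⁻¹ K`, one has `σ (A⁻¹ C + C (A⁻¹)ᵀ) σᵀ = Γ Γᵀ`. -/
theorem lyapunov_inverse_identity {d d' : ℕ}
    (A : Matrix (Fin d) (Fin d) ℝ) (K : Matrix (Fin d) (Fin d') ℝ)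
    (hA : ∀ μ ∈ spectrum ℂ (A.map (Complex.ofReal)), 0 < μ.re)
    (C : Matrix (Fin d) (Fin d) ℝ) (hC : C = lyapunovSolution A K) :
    IsUnit A ∧
      A⁻¹ * (K * Kᵀ) * (A⁻¹)ᵀ = A⁻¹ * C + C * (A⁻¹)ᵀ ∧
      ∀ (n : ℕ) (σ : Matrix (Fin n) (Fin d) ℝ),
        σ * (A⁻¹ * C + C * (A⁻¹)ᵀ) * σᵀ = (σ * A⁻¹ * K) * (σ * A⁻¹ * K)ᵀ := by
  have hU : IsUnit A := isUnit_of_isUnit_map_ofReal <|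
    (spectrum.zero_notMem_iff ℂ).mp fun h => (hA 0 h).false
  have hInv := inv_mul_mul_transpose_inv_eq hU
    (hC ▸ mul_lyapunovSolution_add_lyapunovSolution_mul_transpose A K hA)
  refine ⟨hU, hInv, fun n σ => ?_⟩
  rw [← hInv]
  simp only [transpose_mul, Matrix.mul_assoc]
end

section
/- Cauchy estimate for penalized solutions. Fix T > 0. Let f ∈ C([0,T]; ℝⁿ), let b : ℝⁿ → ℝⁿ be Lipschitz, and let φ : ℝⁿ → ℝ be convex and L-Lipschitz. For p ≥ 1 let φ_p(x) := inf_{z∈ℝⁿ} { φ(z) + (p/2)‖x − z‖² } be the Moreau–Yosida regularization, and assume (as is the case) that each φ_p is differentiable on ℝⁿ with gradient ∇φ_p. For p ≥ 1 let x^p : [0,T] → ℝⁿ be the solution of the ODE ẋ^p(t) + ∇φ_p(x^p(t)) = b(x^p(t)) + f(t) with x^p(0) = x₀. Then there exists a constant C_T > 0, depending only on L, the Lipschitz constant of b, and T, such that for all p, q ≥ 1, sup_{0 ≤ t ≤ T} ‖x^p(t) − x^q(t)‖² ≤ C_T (1/p + 1/q). -/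
open Set MeasureTheory

/-- The Moreau–Yosida regularization `φ_p(x) := inf_z { φ(z) + (p/2)‖x − z‖² }`. -/
noncomputable def moreauYosida {n : ℕ} (φ : EuclideanSpace ℝ (Fin n) → ℝ) (p : ℝ)
    (x : EuclideanSpace ℝ (Fin n)) : ℝ :=
  ⨅ z : EuclideanSpace ℝ (Fin n), (φ z + p / 2 * ‖x - z‖ ^ 2)

/-!
The difference `u = x^p - x^q` satisfies
`½ d/dt ‖u‖² = ⟪b(x^p) - b(x^q), u⟫ - ⟪∇φ_p(x^p) - ∇φ_q(x^q), u⟫`, the forcing `f` cancelling.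
The first term is at most `Lb ‖u‖²`. The regularization `φ_p` is convex, being a partial infimum
of the jointly convex `(x, z) ↦ φ z + p/2 ‖x - z‖²`, and it is squeezed as
`φ - L²/(2p) ≤ φ_p ≤ φ`; adding the gradient inequalities of `φ_p` at `x` and of `φ_q` at `y`
then gives `⟪∇φ_p x - ∇φ_q y, x - y⟫ ≥ -(L²/2)(1/p + 1/q)`. Since `u 0 = 0`, Grönwall's
inequality bounds `‖u‖²` by a multiple of `1/p + 1/q` depending only on `L`, `Lb` and `T`.
-/

open Filter Topology RealInnerProductSpace

section

variable {E F : Type*}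

theorem ConvexOn.apply_sub_le_sub_of_hasFDerivAt [NormedAddCommGroup E] [NormedSpace ℝ E]
    {s : Set E} {f : E → ℝ} {f' : E →L[ℝ] ℝ} {x y : E} (hf : ConvexOn ℝ s f) (hx : x ∈ s)
    (hy : y ∈ s) (hf' : HasFDerivAt f f' x) : f' (y - x) ≤ f y - f x := by
  let ℓ : ℝ →ᵃ[ℝ] E := AffineMap.lineMap x y
  have hline : ConvexOn ℝ (ℓ ⁻¹' s) (f ∘ ℓ) := hf.comp_affineMap ℓ
  have hderiv : HasDerivAt (f ∘ ℓ) (f' (y - x)) 0 := by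
    rw [← AffineMap.lineMap_apply_zero x y (k := ℝ)] at hf'
    exact hf'.comp_hasDerivAt 0 AffineMap.hasDerivAt_lineMap
  simpa [slope, ℓ] using
    hline.le_slope_of_hasDerivAt (by simpa [ℓ]) (by simpa [ℓ]) zero_lt_one hderiv

theorem ConvexOn.inner_sub_le_sub_of_hasGradientAt [NormedAddCommGroup E] [InnerProductSpace ℝ E]
    [CompleteSpace E] {s : Set E} {f : E → ℝ} {g x y : E} (hf : ConvexOn ℝ s f) (hx : x ∈ s)
    (hy : y ∈ s) (hg : HasGradientAt f g x) : ⟪g, y - x⟫ ≤ f y - f x := by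
  simpa using hf.apply_sub_le_sub_of_hasFDerivAt hx hy hg.hasFDerivAt

theorem ConvexOn.iInf_right [AddCommGroup E] [Module ℝ E] [AddCommGroup F] [Module ℝ F]
    {G : E → F → ℝ} (hG : ConvexOn ℝ univ (Function.uncurry G))
    (hbdd : ∀ x, BddBelow (range (G x))) : ConvexOn ℝ univ fun x ↦ ⨅ z, G x z := by
  refine ⟨convex_univ, fun x _ y _ a c ha hc hac ↦ ?_⟩
  simp only [smul_eq_mul, Real.mul_iInf_of_nonneg ha, Real.mul_iInf_of_nonneg hc]
  refine le_ciInf_add_ciInf fun z w ↦ ?_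
  calc ⨅ z', G (a • x + c • y) z'
      ≤ G (a • x + c • y) (a • z + c • w) := ciInf_le (hbdd _) _
    _ ≤ a * G x z + c * G y w := by
      simpa using hG.2 (mem_univ (x, z)) (mem_univ (y, w)) ha hc hac

theorem LipschitzWith.inner_sub_le [NormedAddCommGroup E] [InnerProductSpace ℝ E]
    {b : E → E} {K : NNReal} (hb : LipschitzWith K b) (x y : E) :
    ⟪b x - b y, x - y⟫ ≤ K * ‖x - y‖ ^ 2 :=
  calc ⟪b x - b y, x - y⟫ ≤ ‖b x - b y‖ * ‖x - y‖ := real_inner_le_norm _ _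
    _ ≤ K * ‖x - y‖ * ‖x - y‖ := by gcongr; exact hb.norm_sub_le x y
    _ = K * ‖x - y‖ ^ 2 := by ring

theorem LipschitzWith.sub_le_add_mul_norm_sq [SeminormedAddCommGroup E]
    {φ : E → ℝ} {L : NNReal} (hφ : LipschitzWith L φ) {p : ℝ} (hp : 0 < p) (x z : E) :
    φ x - L ^ 2 / (2 * p) ≤ φ z + p / 2 * ‖x - z‖ ^ 2 := by
  have hxz : φ x - φ z ≤ L * ‖x - z‖ := (le_abs_self _).trans (hφ.norm_sub_le x z)
  -- `L r ≤ p r² / 2 + L² / (2p)` is AM-GM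
  have hamgm : L * ‖x - z‖ ≤ p / 2 * ‖x - z‖ ^ 2 + L ^ 2 / (2 * p) := by
    rw [← sub_nonneg]
    have : p / 2 * ‖x - z‖ ^ 2 + L ^ 2 / (2 * p) - L * ‖x - z‖ =
        (p * ‖x - z‖ - L) ^ 2 / (2 * p) := by
      field_simp; ring
    rw [this]; positivity
  linarith

theorem norm_sq_le_gronwallBound_of_inner_deriv_le [NormedAddCommGroup E]
    [InnerProductSpace ℝ E] {u u' : ℝ → E} {K ε a b : ℝ}
    (hu : ∀ t ∈ Icc a b, HasDerivWithinAt u (u' t) (Icc a b) t)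
    (bound : ∀ t ∈ Ico a b, 2 * ⟪u t, u' t⟫ ≤ K * ‖u t‖ ^ 2 + ε) :
    ∀ t ∈ Icc a b, ‖u t‖ ^ 2 ≤ gronwallBound (‖u a‖ ^ 2) K ε (t - a) := by
  refine le_gronwallBound_of_liminf_deriv_right_le (f' := fun t ↦ 2 * ⟪u t, u' t⟫)
    (fun t ht ↦ (hu t ht).norm_sq.continuousWithinAt) (fun t ht r hr ↦ ?_) le_rfl bound
  have hIcc : Icc a b ∈ 𝓝[Ici t] t := Icc_mem_nhdsGE_of_mem ht
  exact ((hu t (Ico_subset_Icc_self ht)).norm_sq.mono_of_mem_nhdsWithin hIcc)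
    |>.liminf_right_slope_le hr

theorem gronwallBound_zero_le_of_le {K ε t T : ℝ} (hK : 0 < K) (hε : 0 ≤ ε) (ht : t ≤ T) :
    gronwallBound 0 K ε t ≤ ε / K * Real.exp (K * T) := by
  rw [gronwallBound_of_K_ne_0 hK.ne']
  simp only [zero_mul, zero_add]
  gcongr
  exact (sub_le_self _ zero_le_one).trans (by gcongr)

end

section MoreauYosida

variable {n : ℕ} {φ : EuclideanSpace ℝ (Fin n) → ℝ} {L : NNReal} {p q : ℝ}

theorem moreauYosida_bddBelow (hφ : LipschitzWith L φ) (hp : 0 < p)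
    (x : EuclideanSpace ℝ (Fin n)) :
    BddBelow (range fun z ↦ φ z + p / 2 * ‖x - z‖ ^ 2) :=
  ⟨_, forall_mem_range.2 (hφ.sub_le_add_mul_norm_sq hp x)⟩

theorem moreauYosida_le (hφ : LipschitzWith L φ) (hp : 0 < p) (x : EuclideanSpace ℝ (Fin n)) :
    moreauYosida φ p x ≤ φ x := by
  simpa [moreauYosida] using ciInf_le (moreauYosida_bddBelow hφ hp x) x

theorem sub_le_moreauYosida (hφ : LipschitzWith L φ) (hp : 0 < p)
    (x : EuclideanSpace ℝ (Fin n)) : φ x - L ^ 2 / (2 * p) ≤ moreauYosida φ p x :=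
  le_ciInf (hφ.sub_le_add_mul_norm_sq hp x)

theorem convexOn_moreauYosida (hconv : ConvexOn ℝ univ φ) (hφ : LipschitzWith L φ)
    (hp : 0 < p) : ConvexOn ℝ univ (moreauYosida φ p) := by
  let E := EuclideanSpace ℝ (Fin n)
  have hdist : ConvexOn ℝ univ fun w : E × E ↦ ‖w.1 - w.2‖ ^ 2 :=
    (convexOn_univ_norm.pow (fun _ _ ↦ norm_nonneg _) 2).comp_linearMap
      (LinearMap.fst ℝ E E - LinearMap.snd ℝ E E)
  have hsnd : ConvexOn ℝ univ fun w : E × E ↦ φ w.2 :=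
    hconv.comp_linearMap (LinearMap.snd ℝ E E)
  exact ConvexOn.iInf_right (hsnd.add (hdist.smul (by positivity : 0 ≤ p / 2)))
    (moreauYosida_bddBelow hφ hp)

theorem inner_sub_gradient_moreauYosida_ge (hconv : ConvexOn ℝ univ φ)
    (hφ : LipschitzWith L φ) (hp : 0 < p) (hq : 0 < q) {gp gq x y : EuclideanSpace ℝ (Fin n)}
    (hgp : HasGradientAt (moreauYosida φ p) gp x) (hgq : HasGradientAt (moreauYosida φ q) gq y) :
    -(L ^ 2 / 2 * (1 / p + 1 / q)) ≤ ⟪gp - gq, x - y⟫ := by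
  have h₁ := (convexOn_moreauYosida hconv hφ hp).inner_sub_le_sub_of_hasGradientAt
    (mem_univ x) (mem_univ y) hgp
  have h₂ := (convexOn_moreauYosida hconv hφ hq).inner_sub_le_sub_of_hasGradientAt
    (mem_univ y) (mem_univ x) hgq
  have h₃ := moreauYosida_le hφ hp y
  have h₄ := sub_le_moreauYosida hφ hp x
  have h₅ := moreauYosida_le hφ hq x
  have h₆ := sub_le_moreauYosida hφ hq y
  have hyx : ⟪gp, y - x⟫ = -⟪gp, x - y⟫ := by rw [← inner_neg_right, neg_sub]
  have hL : L ^ 2 / 2 * (1 / p + 1 / q) = L ^ 2 / (2 * p) + L ^ 2 / (2 * q) := by ring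
  rw [inner_sub_left, hL]
  linarith

end MoreauYosida

theorem penalized_cauchy_estimate_general {n : ℕ} (T : ℝ)
    (f : ℝ → EuclideanSpace ℝ (Fin n))
    (b : EuclideanSpace ℝ (Fin n) → EuclideanSpace ℝ (Fin n))
    (Lb : NNReal) (hb : LipschitzWith Lb b)
    (φ : EuclideanSpace ℝ (Fin n) → ℝ) (hconv : ConvexOn ℝ univ φ)
    (L : NNReal) (hLip : LipschitzWith L φ)
    (g : ℝ → EuclideanSpace ℝ (Fin n) → EuclideanSpace ℝ (Fin n))
    (hgrad : ∀ p : ℝ, 1 ≤ p → ∀ x, HasGradientAt (moreauYosida φ p) (g p x) x)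
    (x₀ : EuclideanSpace ℝ (Fin n))
    (X : ℝ → ℝ → EuclideanSpace ℝ (Fin n))
    (hX0 : ∀ p : ℝ, 1 ≤ p → X p 0 = x₀)
    (hXode : ∀ p : ℝ, 1 ≤ p → ∀ t ∈ Icc (0 : ℝ) T,
      HasDerivWithinAt (X p) (b (X p t) + f t - g p (X p t)) (Icc 0 T) t) :
    ∃ C > (0 : ℝ), ∀ p q : ℝ, 1 ≤ p → 1 ≤ q → ∀ t ∈ Icc (0 : ℝ) T,
      ‖X p t - X q t‖ ^ 2 ≤ C * (1 / p + 1 / q) := by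
  -- the `+ 1`s keep `K` and the constant positive, also when `Lb = 0` or `L = 0`
  set K : ℝ := 2 * Lb + 1
  refine ⟨(L ^ 2 + 1) / K * Real.exp (K * T), by positivity, fun p q hp hq t ht ↦ ?_⟩
  set ε : ℝ := (L ^ 2 + 1) * (1 / p + 1 / q)
  have hV : ∀ x y, 2 * ⟪x - y, (b x - g p x) - (b y - g q y)⟫ ≤ K * ‖x - y‖ ^ 2 + ε := by
    intro x y
    have hb' := hb.inner_sub_le x y
    have hg := inner_sub_gradient_moreauYosida_ge hconv hLip (by linarith) (by linarith)
      (hgrad p hp x) (hgrad q hq y)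
    have hpq : 0 ≤ 1 / p + 1 / q := by positivity
    rw [sub_sub_sub_comm, real_inner_comm, inner_sub_left]
    nlinarith [sq_nonneg ‖x - y‖]
  have hderiv : ∀ t ∈ Icc 0 T, HasDerivWithinAt (fun t ↦ X p t - X q t)
      ((b (X p t) - g p (X p t)) - (b (X q t) - g q (X q t))) (Icc 0 T) t := fun t ht ↦
    ((hXode p hp t ht).sub (hXode q hq t ht)).congr_deriv (by abel)
  have hgron := norm_sq_le_gronwallBound_of_inner_deriv_le hderiv (fun t _ ↦ hV _ _) t ht
  rw [hX0 p hp, hX0 q hq, sub_self, norm_zero, zero_pow two_ne_zero, sub_zero] at hgron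
  calc ‖X p t - X q t‖ ^ 2 ≤ ε / K * Real.exp (K * T) :=
        hgron.trans (gronwallBound_zero_le_of_le (by positivity) (by positivity) ht.2)
    _ = (L ^ 2 + 1) / K * Real.exp (K * T) * (1 / p + 1 / q) := by ring

/-- Cauchy estimate for penalized solutions: if `φ` is convex and `L`-Lipschitz, `b` is
Lipschitz, `f` is continuous, and for each `p ≥ 1` the function `x^p` solves
`ẋ^p + ∇φ_p(x^p) = b(x^p) + f` with `x^p(0) = x₀` (where `∇φ_p` is the gradient of the
Moreau–Yosida regularization `φ_p`), then there is a constant `C_T > 0` such that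
`sup_{0≤t≤T} ‖x^p(t) − x^q(t)‖² ≤ C_T (1/p + 1/q)` for all `p, q ≥ 1`. -/
theorem penalized_cauchy_estimate {n : ℕ} (T : ℝ) (hT : 0 < T)
    (f : ℝ → EuclideanSpace ℝ (Fin n)) (hf : ContinuousOn f (Icc 0 T))
    (b : EuclideanSpace ℝ (Fin n) → EuclideanSpace ℝ (Fin n))
    (Lb : NNReal) (hb : LipschitzWith Lb b)
    (φ : EuclideanSpace ℝ (Fin n) → ℝ) (hconv : ConvexOn ℝ univ φ)
    (L : NNReal) (hLip : LipschitzWith L φ)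
    (g : ℝ → EuclideanSpace ℝ (Fin n) → EuclideanSpace ℝ (Fin n))
    (hgrad : ∀ p : ℝ, 1 ≤ p → ∀ x, HasGradientAt (moreauYosida φ p) (g p x) x)
    (x₀ : EuclideanSpace ℝ (Fin n))
    (X : ℝ → ℝ → EuclideanSpace ℝ (Fin n))
    (hX0 : ∀ p : ℝ, 1 ≤ p → X p 0 = x₀)
    (hXode : ∀ p : ℝ, 1 ≤ p → ∀ t ∈ Icc (0 : ℝ) T,
      HasDerivWithinAt (X p) (b (X p t) + f t - g p (X p t)) (Icc 0 T) t) :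
    ∃ C > (0 : ℝ), ∀ p q : ℝ, 1 ≤ p → 1 ≤ q → ∀ t ∈ Icc (0 : ℝ) T,
      ‖X p t - X q t‖ ^ 2 ≤ C * (1 / p + 1 / q) :=
  penalized_cauchy_estimate_general T f b Lb hb φ hconv L hLip g hgrad x₀ X hX0 hXode
end

section
/- Uniform a priori bound for the penalized coupled system. Fix T > 0. Let f ∈ C([0,T]; ℝⁿ); let b^x : ℝⁿ × ℝᵐ → ℝⁿ and b^z : ℝⁿ × ℝᵐ → ℝᵐ be Lipschitz; let φ : ℝⁿ → ℝ be convex and L-Lipschitz with φ ≥ 0 = φ(0); let ψ : ℝᵐ → [0,+∞] be a proper lower semicontinuous convex function with ψ ≥ 0 = ψ(0). For p ≥ 1 let φ_p and ψ_p denote the Moreau–Yosida regularizations (assumed, as is the case, differentiable with gradients ∇φ_p, ∇ψ_p), and let (x^p, z^p) : [0,T] → ℝⁿ × ℝᵐ solve ẋ^p + ∇φ_p(x^p) = b^x(x^p, z^p) + f, x^p(0) = x₀, and ż^p + ∇ψ_p(z^p) = b^z(x^p, z^p), z^p(0) = z₀. Then there exists a constant C > 0, independent of p, such that for all t ∈ [0,T],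 sup_{0 ≤ s ≤ t} ( ‖x^p(s)‖² + ‖z^p(s)‖² ) ≤ C e^{C t}. -/
/-! Testing the system against `(x, z)` gives
`(d/dt)(‖x‖² + ‖z‖²) = 2⟪x, bˣ + f - ∇φ_p x⟫ + 2⟪z, bᶻ - ∇ψ_p z⟫`. The penalty terms can only
decrease the energy: a Moreau–Yosida envelope `g` of a nonnegative convex function vanishing at `0`
is nonnegative and subhomogeneous, `g (a • y) ≤ a * g y` for `a ∈ [0, 1]`, so differentiating
`a ↦ g (a • x)` at `a = 1` from the left gives `⟪∇g x, x⟫ ≥ g x ≥ 0`, whatever `p` is. The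
remaining terms grow at most linearly by the Lipschitz bounds, so `‖x‖² + ‖z‖² + 1` satisfies a
linear differential inequality with constants independent of `p`, and Grönwall's inequality
concludes. -/

open Set MeasureTheory

/-- The Moreau–Yosida regularization of an extended-real-valued function
(real-valued, as the infimum is finite for proper nonnegative `ψ`). -/
noncomputable def moreauYosidaE {m : ℕ} (ψ : EuclideanSpace ℝ (Fin m) → EReal) (p : ℝ)
    (x : EuclideanSpace ℝ (Fin m)) : ℝ :=
  (⨅ z : EuclideanSpace ℝ (Fin m), (ψ z + ((p / 2 * ‖x - z‖ ^ 2 : ℝ) : EReal))).toReal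

open Filter
open scoped RealInnerProductSpace Topology

lemma norm_smul_sq_le_mul {E : Type*} [SeminormedAddCommGroup E] [NormedSpace ℝ E] {a : ℝ}
    (ha₀ : 0 ≤ a) (ha₁ : a ≤ 1) (v : E) : ‖a • v‖ ^ 2 ≤ a * ‖v‖ ^ 2 := by
  rw [norm_smul, Real.norm_eq_abs, abs_of_nonneg ha₀, mul_pow]
  nlinarith [mul_nonneg (mul_nonneg ha₀ (sub_nonneg.mpr ha₁)) (sq_nonneg ‖v‖)]

lemma LipschitzWith.norm_le_mul_norm_add {E F : Type*} [SeminormedAddCommGroup E]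
    [SeminormedAddCommGroup F] {K : NNReal} {f : E → F} (hf : LipschitzWith K f) (x : E) :
    ‖f x‖ ≤ K * ‖x‖ + ‖f 0‖ := by
  have := hf.norm_sub_le x 0
  rw [sub_zero] at this
  linarith [norm_sub_norm_le (f x) (f 0)]

lemma ConvexOn.map_smul_le_of_map_zero {E : Type*} [AddCommGroup E] [Module ℝ E] {φ : E → ℝ}
    (hφ : ConvexOn ℝ univ φ) (hφzero : φ 0 = 0) {a : ℝ} (ha₀ : 0 ≤ a) (ha₁ : a ≤ 1) (z : E) :
    φ (a • z) ≤ a * φ z := by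
  simpa [hφzero] using hφ.2 (mem_univ z) (mem_univ 0) ha₀ (sub_nonneg.mpr ha₁) (add_sub_cancel a 1)

theorem le_inner_of_hasGradientAt_of_smul_le {E : Type*} [NormedAddCommGroup E]
    [InnerProductSpace ℝ E] [CompleteSpace E] {g : E → ℝ} {G x : E} (hg : HasGradientAt g G x)
    (hsub : ∀ a ∈ Ioo (0 : ℝ) 1, g (a • x) ≤ a * g x) : g x ≤ ⟪G, x⟫ := by
  set h : ℝ → ℝ := fun t => g (t • x)
  have hderiv : HasDerivAt h ⟪G, x⟫ 1 := by
    have hline : HasDerivAt (fun t : ℝ => t • x) x 1 := by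
      simpa using (hasDerivAt_id (1 : ℝ)).smul_const x
    have hg' := hg.hasFDerivAt
    rw [← one_smul ℝ x] at hg'
    exact hg'.comp_hasDerivAt 1 hline
  have hslope : ∀ t ∈ Ioo (0 : ℝ) 1, g x ≤ slope h 1 t := by
    intro t ht
    rw [slope_def_field, le_div_iff_of_neg (by linarith [ht.2])]
    have := hsub t ht
    simp only [h, one_smul]
    linarith
  refine ge_of_tendsto (hderiv.tendsto_slope.mono_left (nhdsLT_le_nhdsNE 1)) ?_
  filter_upwards [Ioo_mem_nhdsLT zero_lt_one] using hslope

section MoreauYosida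

variable {m : ℕ} {ψ : EuclideanSpace ℝ (Fin m) → EReal} {p : ℝ}

lemma moreauYosidaE_nonneg (hψ0 : ∀ z, 0 ≤ ψ z) (hp : 0 ≤ p) (x : EuclideanSpace ℝ (Fin m)) :
    0 ≤ moreauYosidaE ψ p x :=
  EReal.toReal_nonneg <| le_iInf fun z => add_nonneg (hψ0 z) (EReal.coe_nonneg.mpr (by positivity))

lemma moreauYosidaE_smul_le (hψ0 : ∀ z, 0 ≤ ψ z) (hψzero : ψ 0 = 0)
    (hψsmul : ∀ a : ℝ, 0 ≤ a → a ≤ 1 → ∀ z, ψ (a • z) ≤ a * ψ z) (hp : 0 ≤ p) {a : ℝ}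
    (ha₀ : 0 < a) (ha₁ : a ≤ 1) (y : EuclideanSpace ℝ (Fin m)) :
    moreauYosidaE ψ p (a • y) ≤ a * moreauYosidaE ψ p y := by
  set I : EuclideanSpace ℝ (Fin m) → EReal :=
    fun x => ⨅ z, ψ z + ((p / 2 * ‖x - z‖ ^ 2 : ℝ) : EReal)
  have hI_nonneg : ∀ x, 0 ≤ I x := fun x =>
    le_iInf fun z => add_nonneg (hψ0 z) (EReal.coe_nonneg.mpr (by positivity))
  have hI_le : ∀ x, I x ≤ ((p / 2 * ‖x‖ ^ 2 : ℝ) : EReal) := fun x => by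
    have := iInf_le (fun z => ψ z + ((p / 2 * ‖x - z‖ ^ 2 : ℝ) : EReal)) 0
    rwa [hψzero, zero_add, sub_zero] at this
  have ha : (0 : EReal) < a := EReal.coe_pos.mpr ha₀
  have hsub : I (a • y) ≤ a * I y := by
    rw [← EReal.div_le_iff_le_mul ha (EReal.coe_ne_top a)]
    refine le_iInf fun z => ?_
    rw [EReal.div_le_iff_le_mul ha (EReal.coe_ne_top a)]
    have hdist : p / 2 * ‖a • y - a • z‖ ^ 2 ≤ a * (p / 2 * ‖y - z‖ ^ 2) := by
      rw [← smul_sub, mul_left_comm]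
      exact mul_le_mul_of_nonneg_left (norm_smul_sq_le_mul ha₀.le ha₁ _) (by positivity)
    calc I (a • y) ≤ ψ (a • z) + ((p / 2 * ‖a • y - a • z‖ ^ 2 : ℝ) : EReal) := iInf_le _ (a • z)
      _ ≤ a * ψ z + a * ((p / 2 * ‖y - z‖ ^ 2 : ℝ) : EReal) := by
        rw [← EReal.coe_mul]
        exact add_le_add (hψsmul a ha₀.le ha₁ z) (EReal.coe_le_coe_iff.mpr hdist)
      _ = a * (ψ z + ((p / 2 * ‖y - z‖ ^ 2 : ℝ) : EReal)) :=
        (EReal.left_distrib_of_nonneg (hψ0 z) (EReal.coe_nonneg.mpr (by positivity))).symm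
  have hfinite : (a : EReal) * I y ≠ ⊤ := by
    lift I y to ℝ using ⟨((hI_le y).trans_lt (EReal.coe_lt_top _)).ne,
      (EReal.bot_lt_zero.trans_le (hI_nonneg y)).ne'⟩ with r
    exact EReal.coe_mul a r ▸ EReal.coe_ne_top _
  calc moreauYosidaE ψ p (a • y) ≤ ((a : EReal) * I y).toReal :=
        EReal.toReal_le_toReal hsub (EReal.bot_lt_zero.trans_le (hI_nonneg _)).ne' hfinite
    _ = a * moreauYosidaE ψ p y := by rw [EReal.toReal_mul, EReal.toReal_coe]; rfl

lemma moreauYosida_eq_moreauYosidaE_coe {n : ℕ} {φ : EuclideanSpace ℝ (Fin n) → ℝ}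
    (hφ0 : ∀ x, 0 ≤ φ x) {p : ℝ} (hp : 0 ≤ p) :
    moreauYosida φ p = moreauYosidaE (fun z => (φ z : EReal)) p := by
  funext x
  have hbdd : BddBelow (range fun z => φ z + p / 2 * ‖x - z‖ ^ 2) :=
    ⟨0, forall_mem_range.mpr fun z => add_nonneg (hφ0 z) (by positivity)⟩
  simp only [moreauYosidaE, ← EReal.coe_add]
  rw [← Monotone.map_ciInf_of_continuousAt continuous_coe_real_ereal.continuousAt
    EReal.coe_strictMono.monotone hbdd, EReal.toReal_coe, moreauYosida]

theorem inner_gradient_moreauYosidaE_nonneg (hψ0 : ∀ z, 0 ≤ ψ z) (hψzero : ψ 0 = 0)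
    (hψsmul : ∀ a : ℝ, 0 ≤ a → a ≤ 1 → ∀ z, ψ (a • z) ≤ a * ψ z) (hp : 0 ≤ p)
    {G x : EuclideanSpace ℝ (Fin m)} (hG : HasGradientAt (moreauYosidaE ψ p) G x) : 0 ≤ ⟪G, x⟫ :=
  (moreauYosidaE_nonneg hψ0 hp x).trans <| le_inner_of_hasGradientAt_of_smul_le hG
    fun _ ha => moreauYosidaE_smul_le hψ0 hψzero hψsmul hp ha.1 ha.2.le x

theorem inner_gradient_moreauYosida_nonneg {φ : EuclideanSpace ℝ (Fin m) → ℝ}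
    (hφconv : ConvexOn ℝ univ φ) (hφ0 : ∀ x, 0 ≤ φ x) (hφzero : φ 0 = 0) (hp : 0 ≤ p)
    {G x : EuclideanSpace ℝ (Fin m)} (hG : HasGradientAt (moreauYosida φ p) G x) : 0 ≤ ⟪G, x⟫ := by
  rw [moreauYosida_eq_moreauYosidaE_coe hφ0 hp] at hG
  refine inner_gradient_moreauYosidaE_nonneg (fun z => EReal.coe_nonneg.mpr (hφ0 z))
    (by rw [hφzero]; rfl) (fun a ha₀ ha₁ z => ?_) hp hG
  exact_mod_cast hφconv.map_smul_le_of_map_zero hφzero ha₀ ha₁ z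

end MoreauYosida

theorem le_mul_exp_of_hasDerivWithinAt_le_mul {v v' : ℝ → ℝ} {K a b : ℝ}
    (hv : ∀ r ∈ Icc a b, HasDerivWithinAt v (v' r) (Icc a b) r)
    (hbound : ∀ r ∈ Ico a b, v' r ≤ K * v r) :
    ∀ s ∈ Icc a b, v s ≤ v a * Real.exp (K * (s - a)) := by
  have hright : ∀ r ∈ Ico a b, HasDerivWithinAt v (v' r) (Ici r) r := fun r hr =>
    (hv r (Ico_subset_Icc_self hr)).mono_of_mem_nhdsWithin
      (mem_of_superset (Icc_mem_nhdsGE hr.2) (Icc_subset_Icc_left hr.1))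
  intro s hs
  simpa only [gronwallBound_ε0] using
    le_gronwallBound_of_liminf_deriv_right_le (K := K) (ε := 0)
      (fun r hr => (hv r hr).continuousWithinAt)
      (fun r hr _ hq => (hright r hr).liminf_right_slope_le hq) le_rfl
      (fun r hr => (add_zero (K * v r)).symm ▸ hbound r hr) s hs

theorem two_inner_add_two_inner_le_of_linear_growth {E F : Type*} [NormedAddCommGroup E]
    [InnerProductSpace ℝ E] [NormedAddCommGroup F] [InnerProductSpace ℝ F]
    {x f gx bx : E} {z gz bz : F} {Lx Lz B B' M : ℝ}
    (hLx : 0 ≤ Lx) (hLz : 0 ≤ Lz) (hB : 0 ≤ B) (hB' : 0 ≤ B')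
    (hbx : ‖bx‖ ≤ Lx * ‖(x, z)‖ + B) (hbz : ‖bz‖ ≤ Lz * ‖(x, z)‖ + B') (hf : ‖f‖ ≤ M)
    (hgx : 0 ≤ ⟪gx, x⟫) (hgz : 0 ≤ ⟪gz, z⟫) :
    2 * ⟪x, bx + f - gx⟫ + 2 * ⟪z, bz - gz⟫
      ≤ (2 * (Lx + Lz) + B + B' + M) * (‖x‖ ^ 2 + ‖z‖ ^ 2 + 1) := by
  set r := ‖(x, z)‖
  have hxr : ‖x‖ ≤ r := norm_fst_le (x, z)
  have hzr : ‖z‖ ≤ r := norm_snd_le (x, z)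
  have hr_sq : r ^ 2 ≤ ‖x‖ ^ 2 + ‖z‖ ^ 2 := by
    rcases max_choice ‖x‖ ‖z‖ with h | h <;> rw [show r = max ‖x‖ ‖z‖ from Prod.norm_def _, h]
      <;> linarith [sq_nonneg ‖x‖, sq_nonneg ‖z‖]
  have hM : 0 ≤ M := (norm_nonneg f).trans hf
  have hinner_x : ⟪x, bx + f - gx⟫ ≤ (‖bx‖ + ‖f‖) * r := by
    rw [inner_sub_right, inner_add_right, real_inner_comm gx x]
    nlinarith [real_inner_le_norm x bx, real_inner_le_norm x f, norm_nonneg bx, norm_nonneg f]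
  have hinner_z : ⟪z, bz - gz⟫ ≤ ‖bz‖ * r := by
    rw [inner_sub_right, real_inner_comm gz z]
    nlinarith [real_inner_le_norm z bz, norm_nonneg bz]
  have hr : 0 ≤ r := norm_nonneg _
  nlinarith [sq_nonneg (r - 1), mul_le_mul_of_nonneg_right hbx hr,
    mul_le_mul_of_nonneg_right hbz hr, mul_le_mul_of_nonneg_right hf hr]

theorem penalized_coupled_apriori_bound_general {n m : ℕ} (T : ℝ)
    (f : ℝ → EuclideanSpace ℝ (Fin n)) (hf : ContinuousOn f (Icc 0 T))
    (bx : EuclideanSpace ℝ (Fin n) × EuclideanSpace ℝ (Fin m) → EuclideanSpace ℝ (Fin n))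
    (bz : EuclideanSpace ℝ (Fin n) × EuclideanSpace ℝ (Fin m) → EuclideanSpace ℝ (Fin m))
    (hbx : ∃ Lx : NNReal, LipschitzWith Lx bx) (hbz : ∃ Lz : NNReal, LipschitzWith Lz bz)
    (φ : EuclideanSpace ℝ (Fin n) → ℝ) (hφconv : ConvexOn ℝ univ φ)
    (hφ0 : ∀ x, 0 ≤ φ x) (hφzero : φ 0 = 0)
    (ψ : EuclideanSpace ℝ (Fin m) → EReal)
    (hψ0 : ∀ z, 0 ≤ ψ z) (hψzero : ψ 0 = 0)
    (hψconv : ∀ z w : EuclideanSpace ℝ (Fin m), ∀ a b : ℝ, 0 ≤ a → 0 ≤ b → a + b = 1 →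
      ψ (a • z + b • w) ≤ (a : EReal) * ψ z + (b : EReal) * ψ w)
    (gφ : ℝ → EuclideanSpace ℝ (Fin n) → EuclideanSpace ℝ (Fin n))
    (gψ : ℝ → EuclideanSpace ℝ (Fin m) → EuclideanSpace ℝ (Fin m))
    (hgφ : ∀ p : ℝ, 1 ≤ p → ∀ x, HasGradientAt (moreauYosida φ p) (gφ p x) x)
    (hgψ : ∀ p : ℝ, 1 ≤ p → ∀ x, HasGradientAt (moreauYosidaE ψ p) (gψ p x) x)
    (x₀ : EuclideanSpace ℝ (Fin n)) (z₀ : EuclideanSpace ℝ (Fin m))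
    (X : ℝ → ℝ → EuclideanSpace ℝ (Fin n)) (Z : ℝ → ℝ → EuclideanSpace ℝ (Fin m))
    (hX0 : ∀ p : ℝ, 1 ≤ p → X p 0 = x₀) (hZ0 : ∀ p : ℝ, 1 ≤ p → Z p 0 = z₀)
    (hXode : ∀ p : ℝ, 1 ≤ p → ∀ t ∈ Icc (0 : ℝ) T,
      HasDerivWithinAt (X p) (bx (X p t, Z p t) + f t - gφ p (X p t)) (Icc 0 T) t)
    (hZode : ∀ p : ℝ, 1 ≤ p → ∀ t ∈ Icc (0 : ℝ) T,
      HasDerivWithinAt (Z p) (bz (X p t, Z p t) - gψ p (Z p t)) (Icc 0 T) t) :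
    ∃ C > (0 : ℝ), ∀ p : ℝ, 1 ≤ p → ∀ t ∈ Icc (0 : ℝ) T, ∀ s ∈ Icc (0 : ℝ) t,
      ‖X p s‖ ^ 2 + ‖Z p s‖ ^ 2 ≤ C * Real.exp (C * t) := by
  obtain ⟨Lx, hLx⟩ := hbx
  obtain ⟨Lz, hLz⟩ := hbz
  obtain ⟨M, hM⟩ := isCompact_Icc.exists_bound_of_continuousOn hf
  set K : ℝ := 2 * (Lx + Lz) + ‖bx 0‖ + ‖bz 0‖ + M
  set v₀ : ℝ := ‖x₀‖ ^ 2 + ‖z₀‖ ^ 2 + 1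
  have hψsmul : ∀ a : ℝ, 0 ≤ a → a ≤ 1 → ∀ z, ψ (a • z) ≤ a * ψ z := fun a ha₀ ha₁ z => by
    simpa [hψzero] using hψconv z 0 a (1 - a) ha₀ (sub_nonneg.mpr ha₁) (add_sub_cancel a 1)
  refine ⟨max K v₀, lt_max_of_lt_right (by positivity), fun p hp t ht s hs => ?_⟩
  have hp₀ : 0 ≤ p := zero_le_one.trans hp
  have henergy : ∀ r ∈ Icc 0 T, HasDerivWithinAt (fun r => ‖X p r‖ ^ 2 + ‖Z p r‖ ^ 2 + 1)
      (2 * ⟪X p r, bx (X p r, Z p r) + f r - gφ p (X p r)⟫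
        + 2 * ⟪Z p r, bz (X p r, Z p r) - gψ p (Z p r)⟫) (Icc 0 T) r := fun r hr =>
    ((hXode p hp r hr).norm_sq.add (hZode p hp r hr).norm_sq).add_const 1
  have hbound : ∀ r ∈ Ico 0 T, 2 * ⟪X p r, bx (X p r, Z p r) + f r - gφ p (X p r)⟫
      + 2 * ⟪Z p r, bz (X p r, Z p r) - gψ p (Z p r)⟫ ≤ K * (‖X p r‖ ^ 2 + ‖Z p r‖ ^ 2 + 1) :=
    fun r hr => two_inner_add_two_inner_le_of_linear_growth Lx.2 Lz.2 (norm_nonneg _)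
      (norm_nonneg _) (hLx.norm_le_mul_norm_add _) (hLz.norm_le_mul_norm_add _)
      (hM r (Ico_subset_Icc_self hr))
      (inner_gradient_moreauYosida_nonneg hφconv hφ0 hφzero hp₀ (hgφ p hp _))
      (inner_gradient_moreauYosidaE_nonneg hψ0 hψzero hψsmul hp₀ (hgψ p hp _))
  have hv := le_mul_exp_of_hasDerivWithinAt_le_mul henergy hbound s ⟨hs.1, hs.2.trans ht.2⟩
  rw [hX0 p hp, hZ0 p hp, sub_zero] at hv
  calc ‖X p s‖ ^ 2 + ‖Z p s‖ ^ 2 ≤ v₀ * Real.exp (K * s) := by linarith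
    _ ≤ max K v₀ * Real.exp (max K v₀ * t) := by
      have hs₀ : 0 ≤ s := hs.1
      gcongr ?_ * Real.exp (?_ * ?_)
      exacts [le_max_right K v₀, le_max_left K v₀, hs.2]

/-- Uniform a priori bound for the penalized coupled system: if `(x^p, z^p)` solves
`ẋ^p + ∇φ_p(x^p) = bˣ(x^p,z^p) + f`, `x^p(0) = x₀`, `ż^p + ∇ψ_p(z^p) = bᶻ(x^p,z^p)`,
`z^p(0) = z₀`, then there is `C > 0` independent of `p` such that
`sup_{0≤s≤t} (‖x^p(s)‖² + ‖z^p(s)‖²) ≤ C e^{Ct}` for all `t ∈ [0,T]`. -/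
theorem penalized_coupled_apriori_bound {n m : ℕ} (T : ℝ) (hT : 0 < T)
    (f : ℝ → EuclideanSpace ℝ (Fin n)) (hf : ContinuousOn f (Icc 0 T))
    (bx : EuclideanSpace ℝ (Fin n) × EuclideanSpace ℝ (Fin m) → EuclideanSpace ℝ (Fin n))
    (bz : EuclideanSpace ℝ (Fin n) × EuclideanSpace ℝ (Fin m) → EuclideanSpace ℝ (Fin m))
    (hbx : ∃ Lx : NNReal, LipschitzWith Lx bx) (hbz : ∃ Lz : NNReal, LipschitzWith Lz bz)
    (φ : EuclideanSpace ℝ (Fin n) → ℝ) (hφconv : ConvexOn ℝ univ φ)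
    (L : NNReal) (hφLip : LipschitzWith L φ) (hφ0 : ∀ x, 0 ≤ φ x) (hφzero : φ 0 = 0)
    (ψ : EuclideanSpace ℝ (Fin m) → EReal)
    (hψ0 : ∀ z, 0 ≤ ψ z) (hψzero : ψ 0 = 0) (hψproper : ∃ z, ψ z ≠ ⊤)
    (hψlsc : LowerSemicontinuous ψ)
    (hψconv : ∀ z w : EuclideanSpace ℝ (Fin m), ∀ a b : ℝ, 0 ≤ a → 0 ≤ b → a + b = 1 →
      ψ (a • z + b • w) ≤ (a : EReal) * ψ z + (b : EReal) * ψ w)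
    (gφ : ℝ → EuclideanSpace ℝ (Fin n) → EuclideanSpace ℝ (Fin n))
    (gψ : ℝ → EuclideanSpace ℝ (Fin m) → EuclideanSpace ℝ (Fin m))
    (hgφ : ∀ p : ℝ, 1 ≤ p → ∀ x, HasGradientAt (moreauYosida φ p) (gφ p x) x)
    (hgψ : ∀ p : ℝ, 1 ≤ p → ∀ x, HasGradientAt (moreauYosidaE ψ p) (gψ p x) x)
    (x₀ : EuclideanSpace ℝ (Fin n)) (z₀ : EuclideanSpace ℝ (Fin m))
    (X : ℝ → ℝ → EuclideanSpace ℝ (Fin n)) (Z : ℝ → ℝ → EuclideanSpace ℝ (Fin m))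
    (hX0 : ∀ p : ℝ, 1 ≤ p → X p 0 = x₀) (hZ0 : ∀ p : ℝ, 1 ≤ p → Z p 0 = z₀)
    (hXode : ∀ p : ℝ, 1 ≤ p → ∀ t ∈ Icc (0 : ℝ) T,
      HasDerivWithinAt (X p) (bx (X p t, Z p t) + f t - gφ p (X p t)) (Icc 0 T) t)
    (hZode : ∀ p : ℝ, 1 ≤ p → ∀ t ∈ Icc (0 : ℝ) T,
      HasDerivWithinAt (Z p) (bz (X p t, Z p t) - gψ p (Z p t)) (Icc 0 T) t) :
    ∃ C > (0 : ℝ), ∀ p : ℝ, 1 ≤ p → ∀ t ∈ Icc (0 : ℝ) T, ∀ s ∈ Icc (0 : ℝ) t,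
      ‖X p s‖ ^ 2 + ‖Z p s‖ ^ 2 ≤ C * Real.exp (C * t) :=
  penalized_coupled_apriori_bound_general T f hf bx bz hbx hbz φ hφconv hφ0 hφzero ψ hψ0 hψzero
    hψconv gφ gψ hgφ hgψ x₀ z₀ X Z hX0 hZ0 hXode hZode
end
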